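/- arXiv:2509.12025 — 5 statements merged into one kernel-verified Lean document; each statement's English description precedes it below -/
import Mathlib

section
/- Let p be a prime, α ≥ 0, and let X be a set of more than (p²−2)·(p²−1) positive integers, each with ν_p(a) = α. Then there exist t with 0 < t < p² and distinct elements a₁, …, a_t ∈ X such that ν_p(a₁ + ⋯ + a_t) = α + 1. -/
theorem stmt_10 (p α : ℕ) (hp : p.Prime) (X : Finset ℕ)
    (hXpos : ∀ a ∈ X, 0 < a)
    (hval : ∀ a ∈ X, padicValNat p a = α)
    (hcard : (p ^ 2 - 2) * (p ^ 2 - 1) < X.card) :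
    ∃ t : ℕ, 0 < t ∧ t < p ^ 2 ∧
      ∃ S ⊆ X, S.card = t ∧ padicValNat p (∑ a ∈ S, a) = α + 1 := by
  haveI : Fact p.Prime := ⟨hp⟩
  have hp2 : 2 ≤ p := hp.two_le
  set q := p ^ 2 with hq
  have hq4 : 4 ≤ q := by
    calc (4:ℕ) = 2 ^ 2 := by norm_num
    _ ≤ p ^ 2 := Nat.pow_le_pow_left hp2 2
  haveI : NeZero q := ⟨by positivity⟩
  set b : ℕ → ℕ := fun a => a / p ^ α with hbdef
  have hbspec : ∀ a ∈ X, a = p ^ α * b a ∧ ¬ p ∣ b a := by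
    intro a ha
    have ha0 : a ≠ 0 := (hXpos a ha).ne'
    have hd : p ^ α ∣ a := by
      have := pow_padicValNat_dvd (p := p) (n := a)
      rwa [hval a ha] at this
    have heq : a = p ^ α * b a := (Nat.mul_div_cancel' hd).symm
    refine ⟨heq, fun hdvd => ?_⟩
    have hnd : ¬ p ^ (α + 1) ∣ a := by
      have := pow_succ_padicValNat_not_dvd (p := p) (n := a) ha0
      rwa [hval a ha] at this
    exact hnd (by rw [pow_succ, heq]; exact mul_dvd_mul_left _ hdvd)
  -- pigeonhole target: units of ZMod q
  set T : Finset (ZMod q) := (Finset.univ : Finset (ZMod q)ˣ).image (Units.val) with hT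
  have hTcard : T.card = p ^ 2 - p := by
    rw [hT, Finset.card_image_of_injective _ Units.val_injective, Finset.card_univ,
      ZMod.card_units_eq_totient, hq, Nat.totient_prime_pow hp (by norm_num)]
    have h1 : 1 ≤ p := hp2.trans' (by norm_num)
    have h2 : p ≤ p ^ 2 := Nat.le_self_pow (by norm_num) p
    zify [h1, h2]
    ring
  have hmaps : ∀ a ∈ X, ((b a : ZMod q)) ∈ T := by
    intro a ha
    have hcop : Nat.Coprime (b a) q := by
      have := (hbspec a ha).2
      exact (Nat.Prime.coprime_iff_not_dvd hp).mpr this |>.symm.pow_right 2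
    have hu : IsUnit ((b a : ZMod q)) := (ZMod.isUnit_iff_coprime _ _).mpr hcop
    obtain ⟨u, hu⟩ := hu
    exact Finset.mem_image.mpr ⟨u, Finset.mem_univ u, hu⟩
  have hcard2 : T.card * (q - 1) < X.card := by
    calc T.card * (q - 1) = (p ^ 2 - p) * (q - 1) := by rw [hTcard]
    _ ≤ (p ^ 2 - 2) * (p ^ 2 - 1) := by
        apply Nat.mul_le_mul_right
        omega
    _ < X.card := hcard
  obtain ⟨y, hy, hfib⟩ := Finset.exists_lt_card_fiber_of_mul_lt_card_of_maps_to hmaps hcard2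
  obtain ⟨u, -, huy⟩ := Finset.mem_image.mp hy
  set F := X.filter (fun a => (b a : ZMod q) = y) with hF
  -- choose t
  set t := ((p : ZMod q) * (↑u⁻¹ : ZMod q)).val with htdef
  have htlt : t < q := ZMod.val_lt _
  have hpq : ¬ q ∣ p := by
    intro h
    have h1 := Nat.le_of_dvd hp.pos h
    have h2 : p * 2 ≤ p * p := Nat.mul_le_mul_left p hp2
    have h3 : q = p * p := by rw [hq, pow_two]
    omega
  have hpne : (p : ZMod q) ≠ 0 := by
    rw [Ne, ZMod.natCast_eq_zero_iff]
    exact hpq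
  have htne : t ≠ 0 := by
    intro h0
    have : ((p : ZMod q) * (↑u⁻¹ : ZMod q)) = 0 := by
      rwa [ZMod.val_eq_zero] at h0
    have hp0 : (p : ZMod q) = 0 := by
      have := congrArg (fun z => z * (↑u : ZMod q)) this
      simpa [mul_assoc] using this
    exact hpne hp0
  -- choose S
  have htF : t ≤ F.card := le_trans (Nat.le_pred_of_lt htlt) (le_of_lt hfib)
  obtain ⟨S, hSF, hScard⟩ := Finset.exists_subset_card_eq htF
  have hSX : S ⊆ X := hSF.trans (Finset.filter_subset _ _)
  refine ⟨t, Nat.pos_of_ne_zero htne, htlt, S, hSX, hScard, ?_⟩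
  -- sums
  set N := ∑ a ∈ S, b a with hN
  have hsum : ∑ a ∈ S, a = p ^ α * N := by
    rw [hN, Finset.mul_sum]
    exact Finset.sum_congr rfl fun a ha => (hbspec a (hSX ha)).1
  have hNmod : (N : ZMod q) = (p : ZMod q) := by
    have : ∀ a ∈ S, (b a : ZMod q) = (↑u : ZMod q) := fun a ha => by
      have := (Finset.mem_filter.mp (hSF ha)).2
      rw [this, ← huy]
    rw [hN]
    push_cast
    rw [Finset.sum_congr rfl this, Finset.sum_const, hScard, nsmul_eq_mul, htdef]
    rw [ZMod.natCast_val, ZMod.cast_id, mul_assoc]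
    simp
  have hNmodeq : N ≡ p [MOD q] := (ZMod.natCast_eq_natCast_iff _ _ _).mp hNmod
  have hpdvdq : p ∣ q := dvd_pow_self p (by norm_num)
  have hpN : p ∣ N := by
    have h2 : N ≡ p [MOD p] := Nat.ModEq.of_dvd hpdvdq hNmodeq
    have : N ≡ 0 [MOD p] := h2.trans (Nat.modEq_zero_iff_dvd.mpr dvd_rfl)
    exact (Nat.modEq_zero_iff_dvd).mp this
  have hqN : ¬ q ∣ N := by
    intro h
    have h0 : N ≡ 0 [MOD q] := Nat.modEq_zero_iff_dvd.mpr h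
    have : (0 : ℕ) ≡ p [MOD q] := h0.symm.trans hNmodeq
    exact hpq ((Nat.modEq_zero_iff_dvd).mp this.symm)
  have hN0 : N ≠ 0 := fun h => hqN (h ▸ dvd_zero q)
  have hvalN : padicValNat p N = 1 := by
    have h1 : 1 ≤ padicValNat p N := by
      exact one_le_padicValNat_of_dvd hN0 hpN
    have h2 : padicValNat p N < 2 := by
      by_contra h
      push_neg at h
      exact hqN (hq ▸ (pow_dvd_pow p h).trans pow_padicValNat_dvd)
    omega
  rw [hsum, padicValNat.mul (pow_ne_zero _ hp.pos.ne') hN0, padicValNat.prime_pow, hvalN]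
end

section
/- Folkman's theorem: for every finite coloring c : ℕ → C (C finite) and every M ∈ ℕ, there exists a set X of M distinct positive integers such that all nonempty subset sums of X receive the same color. -/
/-!
Colour the positive integers by `c` and apply Hindman's theorem: some colour class contains all
finite sums `FS a` of an infinite sequence `a` of positive integers. Summing `a` over consecutive
blocks of indices yields a new sequence whose finite sums still lie in `FS a`; making each block
longer than the total of everything before it forces these block sums to be strictly increasing,
so any `M` of them form a set of `M` distinct positive integers with monochromatic subset sums.
-/

open Finset

namespace Hindman

theorem FS_map_subset_image {M N : Type*} [AddSemigroup M] [AddSemigroup N] (f : AddHom M N)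
    (a : Stream' M) : FS (a.map f) ⊆ f '' FS a := by
  intro m hm
  generalize hb : a.map f = b at hm
  induction hm generalizing a with
  | head' b =>
    subst hb
    exact ⟨a.head, FS.head a, rfl⟩
  | tail' b m _ ih =>
    subst hb
    obtain ⟨x, hx, rfl⟩ := ih a.tail rfl
    exact ⟨x, FS.tail a x hx, rfl⟩
  | cons' b m _ ih =>
    subst hb
    obtain ⟨x, hx, rfl⟩ := ih a.tail rfl
    exact ⟨a.head + x, FS.cons a x hx, map_add f _ _⟩

theorem FS.sum_sum_Ico_mem {M : Type*} [AddCommMonoid M] (a : Stream' M) {e : ℕ → ℕ}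
    (he : StrictMono e) {T : Finset ℕ} (hT : T.Nonempty) :
    ∑ j ∈ T, ∑ i ∈ Ico (e j) (e (j + 1)), a.get i ∈ FS a := by
  have hdisj : (T : Set ℕ).PairwiseDisjoint fun j => Ico (e j) (e (j + 1)) := by
    intro j _ j' _ hjj'
    rw [Function.onFun, ← disjoint_coe, coe_Ico, coe_Ico]
    exact he.monotone.pairwise_disjoint_on_Ico_succ hjj'
  rw [← sum_biUnion hdisj]
  obtain ⟨j, hj⟩ := hT
  exact FS.finsetSum a _ ⟨e j, mem_biUnion.2 ⟨j, hj, left_mem_Ico.2 (he j.lt_succ_self)⟩⟩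

end Hindman

section Blocks

variable (b : ℕ → ℕ)

def blockEnd : ℕ → ℕ
  | 0 => 0
  | j + 1 => blockEnd j + 1 + ∑ i ∈ range (blockEnd j), b i

theorem strictMono_blockEnd : StrictMono (blockEnd b) :=
  strictMono_nat_of_lt_succ fun j => by rw [blockEnd]; omega

theorem strictMono_sum_Ico_blockEnd (hb : ∀ i, 0 < b i) :
    StrictMono fun j => ∑ i ∈ Ico (blockEnd b j) (blockEnd b (j + 1)), b i := by
  refine strictMono_nat_of_lt_succ fun j => ?_
  calc ∑ i ∈ Ico (blockEnd b j) (blockEnd b (j + 1)), b i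
      ≤ ∑ i ∈ range (blockEnd b (j + 1)), b i :=
        sum_le_sum_of_subset fun i hi => mem_range.2 (mem_Ico.1 hi).2
    _ < #(Ico (blockEnd b (j + 1)) (blockEnd b (j + 2))) := by
        rw [Nat.card_Ico, blockEnd.eq_2 b (j + 1)]; omega
    _ ≤ ∑ i ∈ Ico (blockEnd b (j + 1)) (blockEnd b (j + 2)), b i :=
        (card_eq_sum_ones _).trans_le (sum_le_sum fun i _ => hb i)

end Blocks

namespace Hindman

theorem exists_strictMono_sum_mem_FS (a : Stream' ℕ) (ha : ∀ i, 0 < a.get i) :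
    ∃ x : ℕ → ℕ, StrictMono x ∧ ∀ T : Finset ℕ, T.Nonempty → ∑ j ∈ T, x j ∈ FS a :=
  ⟨_, strictMono_sum_Ico_blockEnd _ ha, fun _ hT => FS.sum_sum_Ico_mem a (strictMono_blockEnd _) hT⟩

theorem exists_FS_subset_pos_fiber {C : Type*} [Finite C] (c : ℕ → C) :
    ∃ a : Stream' ℕ, ∃ k : C, FS a ⊆ {n | 0 < n ∧ c n = k} := by
  obtain ⟨_, ⟨k, rfl⟩, p, hp⟩ := exists_FS_of_finite_cover
    (Set.range fun k : C => (fun n : ℕ+ => c n) ⁻¹' {k}) (Set.finite_range _)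
    fun n _ => Set.mem_sUnion.2 ⟨_, ⟨c n, rfl⟩, rfl⟩
  refine ⟨p.map PNat.coeAddHom, k, fun _ hm => ?_⟩
  obtain ⟨n, hn, rfl⟩ := FS_map_subset_image _ _ hm
  exact ⟨n.pos, hp hn⟩

end Hindman

open Hindman in
theorem stmt_11 (C : Type) [Finite C] (c : ℕ → C) (M : ℕ) :
    ∃ X : Finset ℕ, X.card = M ∧ (∀ a ∈ X, 0 < a) ∧
      ∃ k : C, ∀ S ⊆ X, S.Nonempty → c (∑ a ∈ S, a) = k := by
  obtain ⟨a, k, hk⟩ := exists_FS_subset_pos_fiber c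
  have ha : ∀ i, 0 < a.get i := fun i => (hk (FS.singleton a i)).1
  obtain ⟨x, hx, hxa⟩ := exists_strictMono_sum_mem_FS a ha
  refine ⟨(range M).image x, by rw [card_image_of_injective _ hx.injective, card_range], ?_, k, ?_⟩
  · rintro _ hj
    obtain ⟨j, -, rfl⟩ := mem_image.1 hj
    simpa using (hk (hxa {j} (singleton_nonempty j))).1
  · intro S hS hSne
    obtain ⟨T, -, rfl⟩ := subset_image_iff.1 hS
    rw [sum_image hx.injective.injOn]
    exact (hk (hxa T (image_nonempty.1 hSne))).2
end

section
/- Suppose the set ℙ of primes is finite. Define the coloring c(n) = (ν_2(n) mod 2, ξ_2(n) mod 4) ⌢ (ξ_p(n) mod p : p ∈ ℙ odd). If X is a set of positive integers such that FS(X) is c-monochromatic, then for any two distinct a, b ∈ X, ν_2(a) ≠ ν_2(b). -/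
private lemma odd_ordCompl (n : ℕ) (hn : 0 < n) :
    ¬ 2 ∣ (n / 2 ^ padicValNat 2 n) ∧ n = 2 ^ padicValNat 2 n * (n / 2 ^ padicValNat 2 n) := by
  have h2 : Nat.Prime 2 := Nat.prime_two
  have hf : n.factorization 2 = padicValNat 2 n := Nat.factorization_def n h2
  constructor
  · have := Nat.not_dvd_ordCompl h2 hn.ne'
    rwa [hf] at this
  · have := Nat.ordProj_mul_ordCompl_eq_self n 2
    rw [hf] at this
    omega

theorem stmt_13 (P : Finset ℕ) (hP : ∀ p, p.Prime ↔ p ∈ P)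
    (X : Finset ℕ) (hXpos : ∀ a ∈ X, 0 < a)
    (hmono : ∀ S ⊆ X, ∀ T ⊆ X, S.Nonempty → T.Nonempty →
      padicValNat 2 (∑ a ∈ S, a) % 2 = padicValNat 2 (∑ a ∈ T, a) % 2 ∧
      ((∑ a ∈ S, a) / 2 ^ padicValNat 2 (∑ a ∈ S, a)) % 4 =
        ((∑ a ∈ T, a) / 2 ^ padicValNat 2 (∑ a ∈ T, a)) % 4 ∧
      ∀ q ∈ P, q ≠ 2 →
        ((∑ a ∈ S, a) / q ^ padicValNat q (∑ a ∈ S, a)) % q =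
          ((∑ a ∈ T, a) / q ^ padicValNat q (∑ a ∈ T, a)) % q) :
    ∀ a ∈ X, ∀ b ∈ X, a ≠ b → padicValNat 2 a ≠ padicValNat 2 b := by
  intro a ha b hb hab heq
  have hapos := hXpos a ha
  have hbpos := hXpos b hb
  set k := padicValNat 2 a with hk
  set x := a / 2 ^ k with hx
  set y := b / 2 ^ k with hy
  obtain ⟨hxodd, hxa⟩ := odd_ordCompl a hapos
  have hy' := odd_ordCompl b hbpos
  rw [← heq] at hy'
  obtain ⟨hyodd, hyb⟩ := hy'
  -- from singletons {a}, {b}: x % 4 = y % 4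
  have hsa : ({a} : Finset ℕ) ⊆ X := Finset.singleton_subset_iff.mpr ha
  have hsb : ({b} : Finset ℕ) ⊆ X := Finset.singleton_subset_iff.mpr hb
  have hsab : ({a, b} : Finset ℕ) ⊆ X := by
    intro z hz; simp at hz; rcases hz with rfl | rfl <;> assumption
  have h1 := hmono {a} hsa {b} hsb ⟨a, Finset.mem_singleton_self a⟩
    ⟨b, Finset.mem_singleton_self b⟩
  simp only [Finset.sum_singleton, ← heq] at h1
  have hxy4 : x % 4 = y % 4 := h1.2.1
  -- x + y = 2 * m, m odd
  have hx2 : x % 2 = 1 := by omega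
  have hs4 : (x + y) % 4 = 2 := by omega
  set m := (x + y) / 2 with hm
  have hmval : x + y = 2 * m := by omega
  have hmodd : ¬ 2 ∣ m := by omega
  have habsum : a + b = 2 ^ (k + 1) * m := by
    rw [hxa, hyb, ← Nat.mul_add, hmval, pow_succ]; ring
  have hmpos : 0 < m := by omega
  have hval : padicValNat 2 (a + b) = k + 1 := by
    rw [habsum, padicValNat.mul (by positivity) hmpos.ne',
      padicValNat.prime_pow, padicValNat.eq_zero_of_not_dvd hmodd]
  have h2 := hmono {a} hsa {a, b} hsab ⟨a, Finset.mem_singleton_self a⟩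
    ⟨a, by simp⟩
  rw [Finset.sum_singleton, Finset.sum_pair hab, hval] at h2
  have := h2.1
  omega
end

section
/- Suppose the set ℙ of primes is finite and let p ∈ ℙ be odd. Define c(n) = (ν_2(n) mod 2, ξ_2(n) mod 4) ⌢ (ξ_q(n) mod q : q ∈ ℙ odd). If X is a set of positive integers with FS(X) c-monochromatic, then for any two distinct a, b ∈ X, ν_p(a) ≠ ν_p(b). -/
theorem stmt_14 (P : Finset ℕ) (hP : ∀ p, p.Prime ↔ p ∈ P)
    (p : ℕ) (hpP : p ∈ P) (hodd : p ≠ 2)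
    (X : Finset ℕ) (hXpos : ∀ a ∈ X, 0 < a)
    (hmono : ∀ S ⊆ X, ∀ T ⊆ X, S.Nonempty → T.Nonempty →
      padicValNat 2 (∑ a ∈ S, a) % 2 = padicValNat 2 (∑ a ∈ T, a) % 2 ∧
      ((∑ a ∈ S, a) / 2 ^ padicValNat 2 (∑ a ∈ S, a)) % 4 =
        ((∑ a ∈ T, a) / 2 ^ padicValNat 2 (∑ a ∈ T, a)) % 4 ∧
      ∀ q ∈ P, q ≠ 2 →
        ((∑ a ∈ S, a) / q ^ padicValNat q (∑ a ∈ S, a)) % q =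
          ((∑ a ∈ T, a) / q ^ padicValNat q (∑ a ∈ T, a)) % q) :
    ∀ a ∈ X, ∀ b ∈ X, a ≠ b → padicValNat p a ≠ padicValNat p b := by
  have hpp : p.Prime := (hP p).mpr hpP
  haveI : Fact p.Prime := ⟨hpp⟩
  intro a ha b hb hab hk
  have ha0 : a ≠ 0 := (hXpos a ha).ne'
  have hb0 : b ≠ 0 := (hXpos b hb).ne'
  set k := padicValNat p a with hkdef
  have pka : p ^ k ∣ a := pow_padicValNat_dvd
  have pkb : p ^ k ∣ b := hk ▸ pow_padicValNat_dvd
  set A := a / p ^ k with hAdef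
  set B := b / p ^ k with hBdef
  have haA : a = p ^ k * A := (Nat.mul_div_cancel' pka).symm
  have hbB : b = p ^ k * B := (Nat.mul_div_cancel' pkb).symm
  have hpA : ¬ p ∣ A := by
    rintro ⟨c, hc⟩
    exact pow_succ_padicValNat_not_dvd ha0
      (show p ^ (padicValNat p a + 1) ∣ a from hkdef ▸ (⟨c, by rw [haA, hc]; ring⟩ : p ^ (k+1) ∣ a))
  have hpB : ¬ p ∣ B := by
    rintro ⟨c, hc⟩
    exact pow_succ_padicValNat_not_dvd hb0
      (show p ^ (padicValNat p b + 1) ∣ b from hk ▸ (⟨c, by rw [hbB, hc]; ring⟩ : p ^ (k+1) ∣ b))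
  -- singleton subsets
  have hsa : ({a} : Finset ℕ) ⊆ X := Finset.singleton_subset_iff.mpr ha
  have hsb : ({b} : Finset ℕ) ⊆ X := Finset.singleton_subset_iff.mpr hb
  have hsab : ({a, b} : Finset ℕ) ⊆ X := by
    intro x hx
    rcases Finset.mem_insert.mp hx with h | h
    · exact h ▸ ha
    · exact (Finset.mem_singleton.mp h) ▸ hb
  have hsua : (∑ x ∈ ({a} : Finset ℕ), x) = a := Finset.sum_singleton _ _
  have hsub : (∑ x ∈ ({b} : Finset ℕ), x) = b := Finset.sum_singleton _ _
  have hsuab : (∑ x ∈ ({a, b} : Finset ℕ), x) = a + b := Finset.sum_pair hab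
  -- A ≡ B mod p
  have h1 := (hmono {a} hsa {b} hsb ⟨a, Finset.mem_singleton_self a⟩
    ⟨b, Finset.mem_singleton_self b⟩).2.2 p hpP hodd
  rw [hsua, hsub, ← hkdef, ← hk, ← hAdef, ← hBdef] at h1
  have hAB : (A : ZMod p) = B := (ZMod.natCast_eq_natCast_iff' A B p).mpr h1
  have h2ne : (2 : ZMod p) ≠ 0 := by
    have : ¬ p ∣ 2 := fun h => hodd ((Nat.prime_dvd_prime_iff_eq hpp Nat.prime_two).mp h)
    simpa using (ZMod.natCast_eq_zero_iff 2 p).not.mpr this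
  have hAne : (A : ZMod p) ≠ 0 := by
    simpa using (ZMod.natCast_eq_zero_iff A p).not.mpr hpA
  have hBne : (B : ZMod p) ≠ 0 := by
    simpa using (ZMod.natCast_eq_zero_iff B p).not.mpr hpB
  -- p does not divide A + B
  have hpAB : ¬ p ∣ A + B := by
    intro h
    have h0 : (A : ZMod p) + B = 0 := by
      have := (ZMod.natCast_eq_zero_iff (A + B) p).mpr h
      simpa using this
    rw [← hAB, ← two_mul] at h0
    exact hAne (by
      rcases mul_eq_zero.mp h0 with h | h
      · exact absurd h h2ne
      · exact h)
  -- valuation of a + b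
  have hab0 : a + b ≠ 0 := by positivity
  have hvab : padicValNat p (a + b) = k := by
    have heq : a + b = p ^ k * (A + B) := by rw [haA, hbB]; ring
    rw [heq, padicValNat.mul (pow_ne_zero k hpp.pos.ne') (by
      intro h0; exact hpAB (h0 ▸ dvd_zero p)),
      padicValNat.prime_pow, padicValNat.eq_zero_of_not_dvd hpAB, add_zero]
  -- xi of a + b
  have hxiab : (a + b) / p ^ padicValNat p (a + b) = A + B := by
    rw [hvab, haA, hbB, ← Nat.mul_add, Nat.mul_div_cancel_left _ (pow_pos hpp.pos k)]
  -- compare {a} and {a,b}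
  have h2 := (hmono {a} hsa {a, b} hsab ⟨a, Finset.mem_singleton_self a⟩
    ⟨a, Finset.mem_insert_self a _⟩).2.2 p hpP hodd
  rw [hsua, hsuab, hxiab, ← hkdef, ← hAdef] at h2
  have hfin : (A : ZMod p) = (A : ZMod p) + B := by
    have := (ZMod.natCast_eq_natCast_iff' A (A + B) p).mpr h2
    simpa using this
  have : (B : ZMod p) = 0 := by linear_combination -hfin
  exact hBne this
end

section
/- Let P be a finite set of primes and X a finite set of positive integers with |X| > |P| such that for every p ∈ P, the map a ↦ ν_p(a) is injective on X. Then there exist a subset S ⊆ X and an element a ∈ X \ S such that for every p ∈ P, ν_p((Σ_{s∈S} s) + a) = ν_p(Σ_{s∈S} s). -/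
theorem stmt_17 (P : Finset ℕ) (hPprime : ∀ p ∈ P, p.Prime)
    (X : Finset ℕ) (hXpos : ∀ a ∈ X, 0 < a) (hcard : P.card < X.card)
    (hinj : ∀ p ∈ P, Set.InjOn (padicValNat p) (X : Set ℕ)) :
    ∃ S ⊆ X, ∃ a ∈ X, a ∉ S ∧
      ∀ p ∈ P, padicValNat p ((∑ s ∈ S, s) + a) = padicValNat p (∑ s ∈ S, s) := by
  classical
  have hXne : X.Nonempty := Finset.card_pos.mp (lt_of_le_of_lt (Nat.zero_le _) hcard)
  choose! m hmX hmin using fun p : ℕ => X.exists_min_image (padicValNat p) hXne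
  set S := P.image m with hS
  have hSX : S ⊆ X := by
    intro x hx
    obtain ⟨p, hp, rfl⟩ := Finset.mem_image.mp hx
    exact hmX p
  have hScard : S.card < X.card := lt_of_le_of_lt Finset.card_image_le hcard
  obtain ⟨a, ha⟩ : (X \ S).Nonempty := by
    rw [Finset.sdiff_nonempty]
    intro h
    exact absurd (Finset.card_le_card h) (by omega)
  obtain ⟨haX, haS⟩ := Finset.mem_sdiff.mp ha
  refine ⟨S, hSX, a, haX, haS, ?_⟩
  intro p hp
  have pp : Fact p.Prime := ⟨hPprime p hp⟩
  set v := padicValNat p (m p) with hv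
  have hmS : m p ∈ S := Finset.mem_image_of_mem m hp
  have hmXp : m p ∈ X := hmX p
  -- every element of X has valuation ≥ v; distinct-from-m elements have valuation > v
  have hgt : ∀ x ∈ X, x ≠ m p → v + 1 ≤ padicValNat p x := by
    intro x hx hne
    have h1 : v ≤ padicValNat p x := hmin p x hx
    have h2 : padicValNat p x ≠ v := fun h =>
      hne (hinj p hp (Finset.mem_coe.mpr hx) (Finset.mem_coe.mpr hmXp) (h.trans hv))
    omega
  have hne0 : ∀ x ∈ X, x ≠ 0 := fun x hx => (hXpos x hx).ne'
  -- p^v divides each element of S, p^(v+1) divides each element of S except m p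
  have hdvd_v : ∀ x ∈ S, p ^ v ∣ x := fun x hx =>
    (padicValNat_dvd_iff_le (hne0 x (hSX hx))).mpr (hmin p x (hSX hx))
  have hdvd_v1 : ∀ x ∈ S, x ≠ m p → p ^ (v + 1) ∣ x := fun x hx hne =>
    (padicValNat_dvd_iff_le (hne0 x (hSX hx))).mpr (hgt x (hSX hx) hne)
  have hnotdvd_m : ¬ p ^ (v + 1) ∣ m p := by
    intro h
    have := (padicValNat_dvd_iff_le (hne0 _ hmXp)).mp h
    omega
  -- the sum over S
  have hsum : ∑ s ∈ S, s = m p + ∑ s ∈ S.erase (m p), s :=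
    (Finset.add_sum_erase S id hmS).symm
  have hdvd_erase : p ^ (v + 1) ∣ ∑ s ∈ S.erase (m p), s :=
    Finset.dvd_sum fun x hx =>
      hdvd_v1 x (Finset.mem_of_mem_erase hx) (Finset.ne_of_mem_erase hx)
  have hsum_ne : (∑ s ∈ S, s) ≠ 0 := by
    rw [hsum]
    have := hXpos _ hmXp
    omega
  have hdvd_sum_v : p ^ v ∣ ∑ s ∈ S, s := Finset.dvd_sum hdvd_v
  have hnotdvd_sum : ¬ p ^ (v + 1) ∣ ∑ s ∈ S, s := by
    rw [hsum]
    intro h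
    rw [Nat.add_comm (m p)] at h
    exact hnotdvd_m ((Nat.dvd_add_right hdvd_erase).mp h)
  have hval_sum : padicValNat p (∑ s ∈ S, s) = v := by
    have h1 : v ≤ padicValNat p (∑ s ∈ S, s) :=
      (padicValNat_dvd_iff_le hsum_ne).mp hdvd_sum_v
    have h2 : ¬ v + 1 ≤ padicValNat p (∑ s ∈ S, s) := fun h =>
      hnotdvd_sum ((padicValNat_dvd_iff_le hsum_ne).mpr h)
    omega
  -- facts about a
  have haNe : a ≠ m p := fun h => haS (h ▸ hmS)
  have hdvd_a1 : p ^ (v + 1) ∣ a :=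
    (padicValNat_dvd_iff_le (hne0 a haX)).mpr (hgt a haX haNe)
  have hdvd_a : p ^ v ∣ a := dvd_trans (pow_dvd_pow p (Nat.le_succ v)) hdvd_a1
  have htot_ne : (∑ s ∈ S, s) + a ≠ 0 := by
    have := hXpos a haX; omega
  have hval_tot : padicValNat p ((∑ s ∈ S, s) + a) = v := by
    have h1 : v ≤ padicValNat p ((∑ s ∈ S, s) + a) :=
      (padicValNat_dvd_iff_le htot_ne).mp (Nat.dvd_add hdvd_sum_v hdvd_a)
    have h2 : ¬ v + 1 ≤ padicValNat p ((∑ s ∈ S, s) + a) := by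
      intro h
      have h3 := (padicValNat_dvd_iff_le htot_ne).mpr h
      rw [Nat.add_comm (∑ s ∈ S, s) a] at h3
      exact hnotdvd_sum ((Nat.dvd_add_right hdvd_a1).mp h3)
    omega
  rw [hval_sum, hval_tot]
end
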